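/- Let f : ℝⁿ → ℝ ∪ {+∞} be lower semicontinuous with dom f unbounded. Then the subdifferentials at infinity decompose directionally: ∂f(∞) = ⋃_{u ∈ 𝕊} ∂f(∞;u) and ∂^∞f(∞) = ⋃_{u ∈ 𝕊} ∂^∞f(∞;u). -/
import Mathlib


open Filter Topology Set
open scoped RealInnerProductSpace Pointwise

noncomputable section

/-- `ℝⁿ` with the Euclidean structure. -/
abbrev Eu (n : ℕ) := EuclideanSpace ℝ (Fin n)

/-- `x_k →ᵘ ∞` : `‖x_k‖ → ∞` and `x_k / ‖x_k‖ → u`. -/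
def TendstoDirInfty {n : ℕ} (x : ℕ → Eu n) (u : Eu n) : Prop :=
  Tendsto (fun k => ‖x k‖) atTop atTop ∧
  Tendsto (fun k => ‖x k‖⁻¹ • x k) atTop (𝓝 u)

/-- The Euclidean norm of `p ∈ ℝⁿ × ℝ`. -/
def pnorm {n : ℕ} (p : Eu n × ℝ) : ℝ := Real.sqrt (‖p.1‖ ^ 2 + p.2 ^ 2)

/-- The Euclidean inner product on `ℝⁿ × ℝ`. -/
def pinner {n : ℕ} (v p : Eu n × ℝ) : ℝ := ⟪v.1, p.1⟫ + v.2 * p.2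

/-- The Fréchet (regular) normal cone to `S ⊆ ℝⁿ × ℝ` at `q` (empty when `q ∉ S`). -/
def frechetNCP {n : ℕ} (S : Set (Eu n × ℝ)) (q : Eu n × ℝ) : Set (Eu n × ℝ) :=
  {w | q ∈ S ∧ ∀ ε > 0, ∃ δ > 0, ∀ p ∈ S, pnorm (p - q) < δ →
        pinner w (p - q) ≤ ε * pnorm (p - q)}

/-- Epigraph of `f : ℝⁿ → ℝ ∪ {+∞}`. -/
def epigraph {n : ℕ} (f : Eu n → EReal) : Set (Eu n × ℝ) := {p | f p.1 ≤ (p.2 : EReal)}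

/-- The limiting subdifferential of `f` in direction `u` at infinity:
`ξ` with `(ξ_k, -s_k) ∈ N̂((x_k, r_k); epi f)`, `r_k ≥ f(x_k)`, `x_k →ᵘ ∞`,
`(ξ_k, -s_k) → (ξ, -1)`. -/
def dirSubdiffInfty {n : ℕ} (f : Eu n → EReal) (u : Eu n) : Set (Eu n) :=
  {ξ | ∃ (x : ℕ → Eu n) (r : ℕ → ℝ) (w : ℕ → Eu n × ℝ),
      TendstoDirInfty x u ∧ (∀ k, f (x k) ≤ ((r k : ℝ) : EReal)) ∧
      (∀ k, w k ∈ frechetNCP (epigraph f) (x k, r k)) ∧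
      Tendsto w atTop (𝓝 (ξ, (-1 : ℝ)))}

/-- The singular subdifferential of `f` in direction `u` at infinity. -/
def dirSingSubdiffInfty {n : ℕ} (f : Eu n → EReal) (u : Eu n) : Set (Eu n) :=
  {ξ | ∃ (x : ℕ → Eu n) (r : ℕ → ℝ) (w : ℕ → Eu n × ℝ),
      TendstoDirInfty x u ∧ (∀ k, f (x k) ≤ ((r k : ℝ) : EReal)) ∧
      (∀ k, w k ∈ frechetNCP (epigraph f) (x k, r k)) ∧
      Tendsto w atTop (𝓝 (ξ, (0 : ℝ)))}

/-- The limiting (Mordukhovich) normal cone to `S ⊆ ℝⁿ × ℝ` at `q`: all limits of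
Fréchet normals at points of `S` converging to `q`. -/
def limitingNCP {n : ℕ} (S : Set (Eu n × ℝ)) (q : Eu n × ℝ) : Set (Eu n × ℝ) :=
  {w | ∃ (s v : ℕ → Eu n × ℝ), (∀ k, s k ∈ S) ∧ Tendsto s atTop (𝓝 q) ∧
      (∀ k, v k ∈ frechetNCP S (s k)) ∧ Tendsto v atTop (𝓝 w)}

/-- `𝒩`: the set of all limits of sequences `(ξ_k, ρ_k) ∈ N((x_k, f(x_k)); epi f)`
with `‖x_k‖ → ∞`. -/
def NinfSet {n : ℕ} (f : Eu n → EReal) : Set (Eu n × ℝ) :=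
  {w | ∃ (x : ℕ → Eu n) (v : ℕ → Eu n × ℝ), Tendsto (fun k => ‖x k‖) atTop atTop ∧
      (∀ k, v k ∈ limitingNCP (epigraph f) (x k, (f (x k)).toReal)) ∧
      Tendsto v atTop (𝓝 w)}

/-- Fréchet normals to an epigraph at `(x, r)` are also Fréchet normals at `(x, s)`
whenever `f x ≤ s ≤ r` (vertical translation invariance of epigraphs). -/
lemma frechet_shift {n : ℕ} (f : Eu n → EReal) {x : Eu n} {r s : ℝ}
    (hs : f x ≤ ((s : ℝ) : EReal)) (hsr : s ≤ r) {w : Eu n × ℝ}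
    (hw : w ∈ frechetNCP (epigraph f) (x, r)) :
    w ∈ frechetNCP (epigraph f) (x, s) := by
  obtain ⟨-, H⟩ := hw
  refine ⟨hs, ?_⟩
  intro ε hε
  obtain ⟨δ, hδ, Hδ⟩ := H ε hε
  refine ⟨δ, hδ, ?_⟩
  intro p hp hpd
  have key : p + ((0 : Eu n), r - s) - (x, r) = p - (x, s) := by
    refine Prod.ext ?_ ?_
    · simp
    · simp only [Prod.snd_add, Prod.snd_sub]
      ring
  have hmem : p + ((0 : Eu n), r - s) ∈ epigraph f := by
    simp only [epigraph, Set.mem_setOf_eq, Prod.fst_add, Prod.snd_add, add_zero] at hp ⊢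
    calc f p.1 ≤ ((p.2 : ℝ) : EReal) := hp
    _ ≤ ((p.2 + (r - s) : ℝ) : EReal) := by
        exact_mod_cast (by linarith : p.2 ≤ p.2 + (r - s))
  have := Hδ _ hmem (by rw [key]; exact hpd)
  rwa [key] at this

/-- Generic backward direction: a directional witness gives membership in `NinfSet`. -/
lemma backward_aux {n : ℕ} (f : Eu n → EReal) (hfbot : ∀ x, f x ≠ ⊥) (c : ℝ) (ξ : Eu n)
    (u : Eu n) (x : ℕ → Eu n) (r : ℕ → ℝ) (w : ℕ → Eu n × ℝ)
    (h1 : TendstoDirInfty x u) (h2 : ∀ k, f (x k) ≤ ((r k : ℝ) : EReal))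
    (h3 : ∀ k, w k ∈ frechetNCP (epigraph f) (x k, r k))
    (h4 : Tendsto w atTop (𝓝 (ξ, c))) : (ξ, c) ∈ NinfSet f := by
  refine ⟨x, w, h1.1, ?_, h4⟩
  intro k
  have htop : f (x k) ≠ ⊤ := ne_top_of_le_ne_top (EReal.coe_ne_top (r k)) (h2 k)
  have hco : (((f (x k)).toReal : ℝ) : EReal) = f (x k) := EReal.coe_toReal htop (hfbot _)
  have hle : (f (x k)).toReal ≤ r k := by
    have := h2 k
    rw [← hco] at this
    exact_mod_cast this
  refine ⟨fun _ => (x k, (f (x k)).toReal), fun _ => w k, ?_, tendsto_const_nhds, ?_,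
    tendsto_const_nhds⟩
  · intro _
    simp only [epigraph, Set.mem_setOf_eq, hco, le_refl]
  · intro _
    exact frechet_shift f (le_of_eq hco.symm) hle (h3 k)

/-- Generic forward direction: membership in `NinfSet` yields a directional witness. -/
lemma forward_aux {n : ℕ} (f : Eu n → EReal) (c : ℝ) (ξ : Eu n)
    (h : (ξ, c) ∈ NinfSet f) :
    ∃ u : Eu n, ‖u‖ = 1 ∧ ∃ (x : ℕ → Eu n) (r : ℕ → ℝ) (w : ℕ → Eu n × ℝ),
      TendstoDirInfty x u ∧ (∀ k, f (x k) ≤ ((r k : ℝ) : EReal)) ∧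
      (∀ k, w k ∈ frechetNCP (epigraph f) (x k, r k)) ∧
      Tendsto w atTop (𝓝 (ξ, c)) := by
  obtain ⟨x, v, hx, hv, hvlim⟩ := h
  choose s vv hsmem hslim hvvmem hvvlim using hv
  have hsel : ∀ k, ∃ j, dist (s k j) (x k, (f (x k)).toReal) < 1 ∧
      dist (vv k j) (v k) < 1 / (k + 1) := by
    intro k
    have e1 : ∀ᶠ j in atTop, dist (s k j) (x k, (f (x k)).toReal) < 1 :=
      (hslim k).eventually (Metric.ball_mem_nhds _ one_pos) |>.mono fun j hj => by
        simpa [Metric.mem_ball] using hj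
    have hpos : (0 : ℝ) < 1 / (k + 1) := by positivity
    have e2 : ∀ᶠ j in atTop, dist (vv k j) (v k) < 1 / (k + 1) :=
      (hvvlim k).eventually (Metric.ball_mem_nhds _ hpos) |>.mono fun j hj => by
        simpa [Metric.mem_ball] using hj
    exact (e1.and e2).exists
  choose j hj1 hj2 using hsel
  set y : ℕ → Eu n := fun k => (s k (j k)).1 with hy
  set ρ : ℕ → ℝ := fun k => (s k (j k)).2 with hρ
  set W : ℕ → Eu n × ℝ := fun k => vv k (j k) with hW
  have hepi : ∀ k, f (y k) ≤ ((ρ k : ℝ) : EReal) := fun k => hsmem k (j k)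
  have hfre : ∀ k, W k ∈ frechetNCP (epigraph f) (y k, ρ k) := by
    intro k
    simpa [hW, hy, hρ] using hvvmem k (j k)
  have hynorm : Tendsto (fun k => ‖y k‖) atTop atTop := by
    apply tendsto_atTop_mono (f := fun k => ‖x k‖ - 1)
    · intro k
      have h1 : dist (y k) (x k) ≤ dist (s k (j k)) (x k, (f (x k)).toReal) := by
        rw [Prod.dist_eq]; exact le_max_left _ _
      have h2 : dist (y k) (x k) < 1 := lt_of_le_of_lt h1 (hj1 k)
      have h3 : ‖x k‖ ≤ ‖y k‖ + ‖x k - y k‖ := by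
        calc ‖x k‖ = ‖y k + (x k - y k)‖ := by congr 1; abel
        _ ≤ ‖y k‖ + ‖x k - y k‖ := norm_add_le _ _
      rw [dist_eq_norm] at h2
      have : ‖x k - y k‖ = ‖y k - x k‖ := by rw [norm_sub_rev]
      linarith
    · exact tendsto_atTop_add_const_right atTop (-1) hx
  have hWlim : Tendsto W atTop (𝓝 (ξ, c)) := by
    rw [tendsto_iff_dist_tendsto_zero]
    apply squeeze_zero (fun k => dist_nonneg)
      (g := fun k => 1 / (k + 1) + dist (v k) (ξ, c))
    · intro k
      calc dist (W k) (ξ, c) ≤ dist (W k) (v k) + dist (v k) (ξ, c) := dist_triangle _ _ _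
      _ ≤ 1 / (k + 1) + dist (v k) (ξ, c) := by
          have := hj2 k
          simp only [hW]
          linarith [hj2 k]
    · have hd : Tendsto (fun k => dist (v k) (ξ, c)) atTop (𝓝 0) :=
        tendsto_iff_dist_tendsto_zero.mp hvlim
      simpa using tendsto_one_div_add_atTop_nhds_zero_nat.add hd
  -- shift so that `‖y k‖ ≥ 1`
  obtain ⟨N, hN⟩ := (hynorm.eventually (eventually_ge_atTop (1 : ℝ))).exists_forall_of_atTop
  set Y : ℕ → Eu n := fun k => y (k + N) with hYdef
  have hYnorm : Tendsto (fun k => ‖Y k‖) atTop atTop :=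
    hynorm.comp (tendsto_add_atTop_nat N)
  have hYpos : ∀ k, (1 : ℝ) ≤ ‖Y k‖ := fun k => hN (k + N) (Nat.le_add_left N k)
  set U : ℕ → Eu n := fun k => ‖Y k‖⁻¹ • Y k with hUdef
  have hUsphere : ∀ k, U k ∈ Metric.sphere (0 : Eu n) 1 := by
    intro k
    have hne : ‖Y k‖ ≠ 0 := by linarith [hYpos k]
    simp only [hUdef, Metric.mem_sphere, dist_zero_right, norm_smul, norm_inv, norm_norm]
    field_simp
  obtain ⟨u, hu, φ, hφ, hUφ⟩ :=
    (isCompact_sphere (0 : Eu n) 1).tendsto_subseq hUsphere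
  refine ⟨u, ?_, fun k => Y (φ k), fun k => ρ (φ k + N), fun k => W (φ k + N), ?_, ?_, ?_, ?_⟩
  · simpa [Metric.mem_sphere, dist_zero_right] using hu
  · constructor
    · exact hYnorm.comp hφ.tendsto_atTop
    · exact hUφ
  · intro k; exact hepi (φ k + N)
  · intro k; exact hfre (φ k + N)
  · exact (hWlim.comp (tendsto_add_atTop_nat N)).comp hφ.tendsto_atTop

/-- Directional decomposition of the subdifferentials at infinity:
`∂f(∞) = ⋃_{u ∈ 𝕊} ∂f(∞; u)` and `∂^∞f(∞) = ⋃_{u ∈ 𝕊} ∂^∞f(∞; u)`. -/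
theorem subdiffInfty_eq_iUnion_dir {n : ℕ} (f : Eu n → EReal)
    (hf : LowerSemicontinuous f) (hfbot : ∀ x, f x ≠ ⊥)
    (hdom : ¬ Bornology.IsBounded {x | f x < ⊤}) :
    ({ξ | (ξ, (-1 : ℝ)) ∈ NinfSet f} =
        ⋃ (u : Eu n) (_ : ‖u‖ = 1), dirSubdiffInfty f u) ∧
    ({ξ | (ξ, (0 : ℝ)) ∈ NinfSet f} =
        ⋃ (u : Eu n) (_ : ‖u‖ = 1), dirSingSubdiffInfty f u) := by
  constructor
  · ext ξ
    simp only [Set.mem_setOf_eq, Set.mem_iUnion]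
    constructor
    · intro h
      obtain ⟨u, hu, x, r, w, h1, h2, h3, h4⟩ := forward_aux f (-1) ξ h
      exact ⟨u, hu, x, r, w, h1, h2, h3, h4⟩
    · rintro ⟨u, hu, x, r, w, h1, h2, h3, h4⟩
      exact backward_aux f hfbot (-1) ξ u x r w h1 h2 h3 h4
  · ext ξ
    simp only [Set.mem_setOf_eq, Set.mem_iUnion]
    constructor
    · intro h
      obtain ⟨u, hu, x, r, w, h1, h2, h3, h4⟩ := forward_aux f 0 ξ h
      exact ⟨u, hu, x, r, w, h1, h2, h3, h4⟩
    · rintro ⟨u, hu, x, r, w, h1, h2, h3, h4⟩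
      exact backward_aux f hfbot 0 ξ u x r w h1 h2 h3 h4
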